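/- Let n ≥ 1 be an integer, δ ∈ (0, n], and let K ≥ 1 be a constant such that ℋ^δ_∞(E) ≤ \~ℋ^δ_∞(E) ≤ K · ℋ^δ_∞(E) for every E ⊆ ℝⁿ. Then for every f ∈ BMO(ℝⁿ, ℋ^δ_∞): ‖f‖_{BMO(ℝⁿ,ℋ^δ_∞)} ≤ ‖f‖_{~BMO(ℝⁿ,ℋ^δ_∞)} ≤ (1 + 2K) · ‖f‖_{BMO(ℝⁿ,ℋ^δ_∞)}, where ‖f‖_{~BMO(ℝⁿ,ℋ^δ_∞)} := sup_Q (1/ℋ^δ_∞(Q)) ∫_Q |f − f_{Q,δ}| dℋ^δ_∞, supremum over all cubes Q. -/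

import Mathlib

open scoped ENNReal
open Set MeasureTheory

noncomputable section

/-- An axis-parallel cube in `ℝⁿ`, described by its lower corner and positive side length. -/
structure Cube (n : ℕ) where
  corner : Fin n → ℝ
  side : ℝ
  side_pos : 0 < side

namespace Cube

/-- The half-open cube `∏ᵢ [cornerᵢ, cornerᵢ + side)` as a set of points. -/
def toSet {n : ℕ} (Q : Cube n) : Set (Fin n → ℝ) :=
  {x | ∀ i, Q.corner i ≤ x i ∧ x i < Q.corner i + Q.side}

/-- A cube is dyadic if it has the form `2^k·(z + [0,1)ⁿ)` with `k ∈ ℤ`, `z ∈ ℤⁿ`. -/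
def IsDyadic {n : ℕ} (Q : Cube n) : Prop :=
  ∃ (k : ℤ) (z : Fin n → ℤ), Q.side = (2:ℝ) ^ k ∧ ∀ i, Q.corner i = (z i : ℝ) * (2:ℝ) ^ k

/-- `Q'` is a dyadic subcube of `Q`, i.e. obtained from `Q` by repeated bisection. -/
def IsDyadicSubcube {n : ℕ} (Q' Q : Cube n) : Prop :=
  ∃ (k : ℕ) (z : Fin n → ℕ), (∀ i, z i < 2 ^ k) ∧
    Q'.side = Q.side / 2 ^ k ∧ ∀ i, Q'.corner i = Q.corner i + (z i : ℝ) * (Q.side / 2 ^ k)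

/-- The concentric dilate `t·Q` of a cube. -/
def dilate {n : ℕ} (Q : Cube n) (t : ℝ) (ht : 0 < t) : Cube n :=
  ⟨fun i => Q.corner i + Q.side / 2 - t * Q.side / 2, t * Q.side, mul_pos ht Q.side_pos⟩

end Cube

/-- The Hausdorff content `ℋ^δ_∞`. -/
def hContent (n : ℕ) (δ : ℝ) (E : Set (Fin n → ℝ)) : ℝ≥0∞ :=
  ⨅ (Qs : ℕ → Cube n) (_ : E ⊆ ⋃ i, (Qs i).toSet), ∑' i, ENNReal.ofReal ((Qs i).side ^ δ)

/-- The dyadic Hausdorff content `~ℋ^δ_∞`. -/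
def dContent (n : ℕ) (δ : ℝ) (E : Set (Fin n → ℝ)) : ℝ≥0∞ :=
  ⨅ (Qs : ℕ → Cube n) (_ : (∀ i, (Qs i).IsDyadic) ∧ E ⊆ ⋃ i, (Qs i).toSet),
    ∑' i, ENNReal.ofReal ((Qs i).side ^ δ)

/-- The Choquet integral `∫_E f dℋ^δ_∞`. -/
def integH (n : ℕ) (δ : ℝ) (f : (Fin n → ℝ) → ℝ) (E : Set (Fin n → ℝ)) : ℝ≥0∞ :=
  ∫⁻ t in Ioi (0:ℝ), hContent n δ {x | x ∈ E ∧ t < f x}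

/-- The Choquet integral `∫_E f d~ℋ^δ_∞` w.r.t. the dyadic Hausdorff content. -/
def integD (n : ℕ) (δ : ℝ) (f : (Fin n → ℝ) → ℝ) (E : Set (Fin n → ℝ)) : ℝ≥0∞ :=
  ∫⁻ t in Ioi (0:ℝ), dContent n δ {x | x ∈ E ∧ t < f x}

/-- A property holds `ℋ^δ_∞`-a.e. -/
def AEContent (n : ℕ) (δ : ℝ) (P : (Fin n → ℝ) → Prop) : Prop :=
  hContent n δ {x | ¬ P x} = 0

/-- `ℋ^δ_∞`-quasicontinuity. -/
def QuasiCont (n : ℕ) (δ : ℝ) (f : (Fin n → ℝ) → ℝ) : Prop :=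
  ∀ ε : ℝ, 0 < ε → ∃ O : Set (Fin n → ℝ),
    IsOpen O ∧ hContent n δ O < ENNReal.ofReal ε ∧ ContinuousOn f Oᶜ

/-- `L¹_loc(ℝⁿ, ℋ^δ_∞)`. -/
def MemL1loc (n : ℕ) (δ : ℝ) (f : (Fin n → ℝ) → ℝ) : Prop :=
  QuasiCont n δ f ∧ ∀ K : Set (Fin n → ℝ), IsCompact K → integH n δ (fun x => |f x|) K < ⊤

/-- `L^∞(ℝⁿ, ℋ^δ_∞)`. -/
def MemLinf (n : ℕ) (δ : ℝ) (f : (Fin n → ℝ) → ℝ) : Prop :=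
  QuasiCont n δ f ∧ ∃ M : ℝ, AEContent n δ (fun x => |f x| ≤ M)

/-- The `BMO(ℝⁿ, ℋ^δ_∞)` seminorm. -/
def bmoNorm (n : ℕ) (δ : ℝ) (f : (Fin n → ℝ) → ℝ) : ℝ≥0∞ :=
  ⨆ Q : Cube n, ⨅ c : ℝ,
    integH n δ (fun x => |f x - c|) Q.toSet / hContent n δ Q.toSet

/-- Membership in `BMO(ℝⁿ, ℋ^δ_∞)`. -/
def MemBMO (n : ℕ) (δ : ℝ) (f : (Fin n → ℝ) → ℝ) : Prop :=
  MemL1loc n δ f ∧ bmoNorm n δ f < ⊤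

/-- `essinf_{x ∈ Q} f := inf {t ∈ (0,∞) : ℋ^δ_∞({x ∈ Q : f x < t}) > 0}`. -/
def essInfQ (n : ℕ) (δ : ℝ) (f : (Fin n → ℝ) → ℝ) (Q : Cube n) : ℝ :=
  sInf {t : ℝ | 0 < t ∧ 0 < hContent n δ {x | x ∈ Q.toSet ∧ f x < t}}

/-- The `BLO(ℝⁿ, ℋ^δ_∞)` seminorm. -/
def bloNorm (n : ℕ) (δ : ℝ) (f : (Fin n → ℝ) → ℝ) : ℝ≥0∞ :=
  ⨆ Q : Cube n,
    integH n δ (fun x => |f x - essInfQ n δ f Q|) Q.toSet / hContent n δ Q.toSet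

/-- Membership in `BLO(ℝⁿ, ℋ^δ_∞)`. -/
def MemBLO (n : ℕ) (δ : ℝ) (f : (Fin n → ℝ) → ℝ) : Prop :=
  MemL1loc n δ f ∧ bloNorm n δ f < ⊤

/-- A weight: locally Choquet-integrable, quasicontinuous, positive `ℋ^δ_∞`-a.e. -/
def IsWeight (n : ℕ) (δ : ℝ) (w : (Fin n → ℝ) → ℝ) : Prop :=
  MemL1loc n δ w ∧ AEContent n δ (fun x => 0 < w x)

/-- The capacitary Muckenhoupt `A_{p,δ}` constant, for `p > 1`. -/
def apConst (n : ℕ) (δ p : ℝ) (w : (Fin n → ℝ) → ℝ) : ℝ≥0∞ :=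
  ⨆ Q : Cube n,
    (integH n δ w Q.toSet / hContent n δ Q.toSet) *
      (integH n δ (fun x => w x ^ (-(1 / (p - 1)))) Q.toSet / hContent n δ Q.toSet) ^ (p - 1)

/-- Membership in `A_{p,δ}`, `p > 1`. -/
def MemAp (n : ℕ) (δ p : ℝ) (w : (Fin n → ℝ) → ℝ) : Prop :=
  IsWeight n δ w ∧ apConst n δ p w < ⊤

/-- The Hardy–Littlewood maximal operator w.r.t. `ℋ^δ_∞`. -/
def maxOp (n : ℕ) (δ : ℝ) (g : (Fin n → ℝ) → ℝ) (x : Fin n → ℝ) : ℝ≥0∞ :=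
  ⨆ (Q : Cube n) (_ : x ∈ Q.toSet),
    integH n δ (fun y => |g y|) Q.toSet / hContent n δ Q.toSet

/-- The capacitary `A_{1,δ}` constant. -/
def a1Const (n : ℕ) (δ : ℝ) (w : (Fin n → ℝ) → ℝ) : ℝ≥0∞ :=
  sInf {c : ℝ≥0∞ | 0 < c ∧
    AEContent n δ (fun x => maxOp n δ w x ≤ c * ENNReal.ofReal (w x))}

/-- Membership in `A_{1,δ}`. -/
def MemA1 (n : ℕ) (δ : ℝ) (w : (Fin n → ℝ) → ℝ) : Prop :=
  IsWeight n δ w ∧ a1Const n δ w < ⊤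

/-- The `A_{p,δ}` constant for `p ∈ [1,∞)` (it is the `A_{1,δ}` constant when `p = 1`). -/
def apConstGen (n : ℕ) (δ p : ℝ) (w : (Fin n → ℝ) → ℝ) : ℝ≥0∞ :=
  if p = 1 then a1Const n δ w else apConst n δ p w

/-- Membership in `A_{p,δ}` for `p ∈ [1,∞)` (meaning `A_{1,δ}` when `p = 1`). -/
def MemApGen (n : ℕ) (δ p : ℝ) (w : (Fin n → ℝ) → ℝ) : Prop :=
  IsWeight n δ w ∧ apConstGen n δ p w < ⊤

/-- The weighted `BMO^q_w(ℝⁿ, ℋ^δ_∞)` seminorm. -/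
def bmoWNorm (n : ℕ) (δ q : ℝ) (w f : (Fin n → ℝ) → ℝ) : ℝ≥0∞ :=
  ⨆ Q : Cube n, ⨅ c : ℝ,
    (integH n δ (fun x => |f x - c| ^ q * w x) Q.toSet / integH n δ w Q.toSet) ^ (1 / q)

/-- Membership in `BMO^q_w(ℝⁿ, ℋ^δ_∞)`. -/
def MemBMOw (n : ℕ) (δ q : ℝ) (w f : (Fin n → ℝ) → ℝ) : Prop :=
  QuasiCont n δ f ∧
    (∀ K : Set (Fin n → ℝ), IsCompact K → integH n δ (fun x => |f x| ^ q * w x) K < ⊤) ∧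
    bmoWNorm n δ q w f < ⊤

/-- The integral average `f_{Q,δ}` with respect to the dyadic Hausdorff content. -/
def avgQ (n : ℕ) (δ : ℝ) (f : (Fin n → ℝ) → ℝ) (Q : Cube n) : ℝ :=
  ((integD n δ f (Q.toSet ∩ {x | 0 ≤ f x})).toReal -
      (integD n δ (fun x => -f x) (Q.toSet ∩ {x | f x < 0})).toReal) /
    ((dContent n δ (Q.toSet ∩ {x | 0 ≤ f x})).toReal +
      (dContent n δ (Q.toSet ∩ {x | f x < 0})).toReal)

/-- The mean-based BMO seminorm, taken with respect to the averages `f_{Q,δ}`. -/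
def bmoTildeNorm (n : ℕ) (δ : ℝ) (f : (Fin n → ℝ) → ℝ) : ℝ≥0∞ :=
  ⨆ Q : Cube n,
    integH n δ (fun x => |f x - avgQ n δ f Q|) Q.toSet / hContent n δ Q.toSet

/-!
The lower bound holds because `f_{Q,δ}` is one of the constants in the infimum defining the
BMO norm. For the upper bound fix a cube `Q` and any constant `c`. For a function `g ≥ 0` on a
set `E` and a monotone subadditive set function `μ`, the Choquet integral satisfies
`|∫_E g dμ - c μ(E)| ≤ ∫_E |g - c| dμ`; the nontrivial half `c μ(E) ≤ ∫_E g + ∫_E (c - g)` comes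
from covering `E`, for each level `t`, by `{g > t}` and `{c - g ≥ c - t}`. Applying this to `f` on
`Q ∩ E_{f,+}` and to `-f` on `Q ∩ E_{f,-}` with the dyadic content gives
`|f_{Q,δ} - c| (~ℋ(Q ∩ E_{f,+}) + ~ℋ(Q ∩ E_{f,-})) ≤ 2 ∫_Q |f - c| d~ℋ ≤ 2K ∫_Q |f - c| dℋ`,
and the denominator dominates `ℋ(Q)`. Hence
`∫_Q |f - f_{Q,δ}| dℋ ≤ |f_{Q,δ} - c| ℋ(Q) + ∫_Q |f - c| dℋ ≤ (1 + 2K) ∫_Q |f - c| dℋ`.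
-/

section Choquet

variable {α : Type*}

-- `integH n δ` and `integD n δ` are definitionally `choquet (hContent n δ)` and
-- `choquet (dContent n δ)`.
def choquet (μ : Set α → ℝ≥0∞) (g : α → ℝ) (E : Set α) : ℝ≥0∞ :=
  ∫⁻ t in Ioi (0:ℝ), μ {x | x ∈ E ∧ t < g x}

variable {μ ν : Set α → ℝ≥0∞} {g g' : α → ℝ} {E F : Set α}

lemma choquet_mono (hμ : Monotone μ) (h : ∀ x ∈ E, x ∈ F ∧ g x ≤ g' x) :
    choquet μ g E ≤ choquet μ g' F :=
  lintegral_mono fun _ => hμ fun x hx => ⟨(h x hx.1).1, hx.2.trans_le (h x hx.1).2⟩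

lemma choquet_congr (h : ∀ x ∈ E, g x = g' x) : choquet μ g E = choquet μ g' E := by
  refine lintegral_congr fun t => congrArg μ ?_
  ext x
  exact and_congr_right fun hx => by rw [h x hx]

lemma choquet_le_mul {C : ℝ≥0∞} (hC : C ≠ ⊤) (h : ∀ X, μ X ≤ C * ν X) (g : α → ℝ) (E : Set α) :
    choquet μ g E ≤ C * choquet ν g E :=
  (lintegral_mono fun _ => h _).trans_eq (lintegral_const_mul' C _ hC)

lemma setLIntegral_Ioi_comp_add (c : ℝ) (F : ℝ → ℝ≥0∞) :
    ∫⁻ s in Ioi (0:ℝ), F (s + c) = ∫⁻ t in Ioi c, F t := by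
  rw [(measurePreserving_add_right volume c).setLIntegral_comp_emb
    (Homeomorph.addRight c).measurableEmbedding, image_add_const_Ioi, zero_add]

lemma setLIntegral_Ioo_comp_sub (L : ℝ) (F : ℝ → ℝ≥0∞) :
    ∫⁻ t in Ioo (0:ℝ) L, F (L - t) = ∫⁻ t in Ioo (0:ℝ) L, F t := by
  have hL : MeasurePreserving (fun t : ℝ => L - t) volume volume := by
    simp_rw [sub_eq_add_neg]
    exact (measurePreserving_add_left volume L).comp (Measure.measurePreserving_neg volume)
  rw [hL.setLIntegral_comp_emb (Homeomorph.subLeft L).measurableEmbedding,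
    image_const_sub_Ioo, sub_zero, sub_self]

lemma choquet_const_add {c : ℝ} (hc : 0 ≤ c) (hg : ∀ x ∈ E, 0 ≤ g x) :
    choquet μ (fun x => c + g x) E = ENNReal.ofReal c * μ E + choquet μ g E := by
  have below : ∫⁻ t in Ioc 0 c, μ {x | x ∈ E ∧ t < c + g x} = ENNReal.ofReal c * μ E := by
    rw [← setLIntegral_congr Ioo_ae_eq_Ioc,
      setLIntegral_congr_fun measurableSet_Ioo fun t ht => congrArg μ (sep_eq_self_iff_mem_true.2
        fun x hx => ht.2.trans_le (le_add_of_nonneg_right (hg x hx))),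
      setLIntegral_const, Real.volume_Ioo, sub_zero, mul_comm]
  have above : ∫⁻ t in Ioi c, μ {x | x ∈ E ∧ t < c + g x} = choquet μ g E := by
    rw [← setLIntegral_Ioi_comp_add]
    simp only [add_comm _ c, add_lt_add_iff_left]
    rfl
  rw [choquet, ← Ioc_union_Ioi_eq_Ioi hc, lintegral_union measurableSet_Ioi Ioc_disjoint_Ioi_same,
    below, above]

lemma ofReal_mul_le_choquet_add_choquet_sub (hμ : Monotone μ)
    (hsub : ∀ A B, μ (A ∪ B) ≤ μ A + μ B) {c : ℝ} (hc : 0 < c) :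
    ENNReal.ofReal c * μ E ≤ choquet μ g E + choquet μ (fun x => c - g x) E := by
  -- for `t ∈ (0, b)` with `b < c`, every point of `E` lies in `{t < g}` or in `{b - t < c - g}`
  have below_c : ∀ b < c, ENNReal.ofReal b * μ E ≤
      choquet μ g E + choquet μ (fun x => c - g x) E := by
    intro b hbc
    have hcover : ∀ t ∈ Ioo (0:ℝ) b,
        μ E ≤ μ {x | x ∈ E ∧ t < g x} + μ {x | x ∈ E ∧ b - t < c - g x} := by
      intro t _
      refine (hμ fun x hx => ?_).trans (hsub _ _)
      rcases lt_or_ge t (g x) with h | h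
      · exact Or.inl ⟨hx, h⟩
      · exact Or.inr ⟨hx, by linarith⟩
    have hmeas : Measurable fun t : ℝ => μ {x | x ∈ E ∧ t < g x} :=
      Antitone.measurable fun t t' htt' => hμ fun x hx => ⟨hx.1, htt'.trans_lt hx.2⟩
    calc ENNReal.ofReal b * μ E = ∫⁻ _ in Ioo (0:ℝ) b, μ E := by
          rw [setLIntegral_const, Real.volume_Ioo, sub_zero, mul_comm]
    _ ≤ ∫⁻ t in Ioo (0:ℝ) b, (μ {x | x ∈ E ∧ t < g x} + μ {x | x ∈ E ∧ b - t < c - g x}) :=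
        setLIntegral_mono' measurableSet_Ioo hcover
    _ = (∫⁻ t in Ioo (0:ℝ) b, μ {x | x ∈ E ∧ t < g x}) +
          ∫⁻ t in Ioo (0:ℝ) b, μ {x | x ∈ E ∧ t < c - g x} := by
        rw [lintegral_add_left hmeas,
          setLIntegral_Ioo_comp_sub b fun s => μ {x | x ∈ E ∧ s < c - g x}]
    _ ≤ _ := add_le_add (lintegral_mono_set Ioo_subset_Ioi_self)
        (lintegral_mono_set Ioo_subset_Ioi_self)
  refine ENNReal.le_of_forall_lt_one_mul_le fun a ha => ?_
  have ha_toReal : a.toReal < 1 := by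
    simpa using (ENNReal.toReal_lt_toReal ha.ne_top ENNReal.one_ne_top).2 ha
  calc a * (ENNReal.ofReal c * μ E) = ENNReal.ofReal (a.toReal * c) * μ E := by
        rw [ENNReal.ofReal_mul ENNReal.toReal_nonneg, ENNReal.ofReal_toReal ha.ne_top, mul_assoc]
  _ ≤ _ := below_c _ (by nlinarith)

lemma abs_toReal_choquet_sub_le (hμ : Monotone μ) (hsub : ∀ A B, μ (A ∪ B) ≤ μ A + μ B)
    (hg : ∀ x ∈ E, 0 ≤ g x) (c : ℝ) (hE : μ E ≠ ⊤)
    (hJ : choquet μ (fun x => |g x - c|) E ≠ ⊤) :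
    |(choquet μ g E).toReal - c * (μ E).toReal| ≤ (choquet μ (fun x => |g x - c|) E).toReal := by
  set J := choquet μ (fun x => |g x - c|) E
  have hcE : ∀ b : ℝ, ENNReal.ofReal b * μ E ≠ ⊤ := fun _ =>
    ENNReal.mul_ne_top ENNReal.ofReal_ne_top hE
  have hA : choquet μ g E ≤ ENNReal.ofReal |c| * μ E + J := by
    rw [← choquet_const_add (abs_nonneg c) fun x _ => abs_nonneg _]
    exact choquet_mono hμ fun x hx => ⟨hx, by linarith [le_abs_self c, le_abs_self (g x - c)]⟩
  have hAfin : choquet μ g E ≠ ⊤ := ne_top_of_le_ne_top (ENNReal.add_ne_top.2 ⟨hcE _, hJ⟩) hA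
  rw [abs_sub_le_iff]
  constructor
  · rcases le_or_gt 0 c with hc | hc
    · have h := ENNReal.toReal_mono (ENNReal.add_ne_top.2 ⟨hcE c, hJ⟩)
        ((choquet_mono (g := g) hμ fun x hx => ⟨hx, by linarith [le_abs_self (g x - c)]⟩).trans_eq
          (choquet_const_add hc fun x _ => abs_nonneg (g x - c)))
      rw [ENNReal.toReal_add (hcE c) hJ, ENNReal.toReal_mul, ENNReal.toReal_ofReal hc] at h
      linarith
    · have h : J = ENNReal.ofReal (-c) * μ E + choquet μ g E := by
        rw [← choquet_const_add (by linarith) hg]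
        exact choquet_congr fun x hx => by rw [abs_of_nonneg (by linarith [hg x hx])]; ring
      have h' := congrArg ENNReal.toReal h
      rw [ENNReal.toReal_add (hcE _) hAfin, ENNReal.toReal_mul,
        ENNReal.toReal_ofReal (by linarith)] at h'
      linarith
  · rcases le_or_gt c 0 with hc | hc
    · nlinarith [ENNReal.toReal_nonneg (a := μ E), ENNReal.toReal_nonneg (a := J),
        ENNReal.toReal_nonneg (a := choquet μ g E)]
    · have h := ENNReal.toReal_mono (ENNReal.add_ne_top.2 ⟨hAfin, hJ⟩)
        ((ofReal_mul_le_choquet_add_choquet_sub hμ hsub hc).trans (add_le_add_right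
          (choquet_mono hμ fun x hx => ⟨hx, by linarith [neg_abs_le (g x - c)]⟩) _))
      rw [ENNReal.toReal_mul, ENNReal.toReal_ofReal hc.le, ENNReal.toReal_add hAfin hJ] at h
      linarith

lemma abs_choquet_sub_choquet_neg_sub_le (hμ : Monotone μ)
    (hsub : ∀ A B, μ (A ∪ B) ≤ μ A + μ B) (c : ℝ) (hE : μ E ≠ ⊤)
    (hJ : choquet μ (fun x => |g x - c|) E ≠ ⊤) :
    |((choquet μ g (E ∩ {x | 0 ≤ g x})).toReal -
        (choquet μ (fun x => -g x) (E ∩ {x | g x < 0})).toReal) -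
      c * ((μ (E ∩ {x | 0 ≤ g x})).toReal + (μ (E ∩ {x | g x < 0})).toReal)| ≤
      2 * (choquet μ (fun x => |g x - c|) E).toReal := by
  set J := choquet μ (fun x => |g x - c|) E
  have hJle : ∀ S ⊆ E, choquet μ (fun x => |g x - c|) S ≤ J := fun S hS =>
    choquet_mono hμ fun x hx => ⟨hS hx, le_rfl⟩
  have hpos := abs_toReal_choquet_sub_le hμ hsub (E := E ∩ {x | 0 ≤ g x}) (fun x hx => hx.2) c
    (ne_top_of_le_ne_top hE (hμ inter_subset_left))
    (ne_top_of_le_ne_top hJ (hJle _ inter_subset_left))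
  have hneg_congr : choquet μ (fun x => |-g x - -c|) (E ∩ {x | g x < 0}) =
      choquet μ (fun x => |g x - c|) (E ∩ {x | g x < 0}) :=
    choquet_congr fun x _ => by rw [← abs_neg]; ring_nf
  have hneg := abs_toReal_choquet_sub_le hμ hsub (g := fun x => -g x) (E := E ∩ {x | g x < 0})
    (fun x hx => neg_nonneg.2 hx.2.le) (-c) (ne_top_of_le_ne_top hE (hμ inter_subset_left))
    (hneg_congr ▸ ne_top_of_le_ne_top hJ (hJle _ inter_subset_left))
  rw [hneg_congr] at hneg
  have hJpos := ENNReal.toReal_mono hJ (hJle (E ∩ {x | 0 ≤ g x}) inter_subset_left)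
  have hJneg := ENNReal.toReal_mono hJ (hJle (E ∩ {x | g x < 0}) inter_subset_left)
  calc _ = |((choquet μ g (E ∩ {x | 0 ≤ g x})).toReal - c * (μ (E ∩ {x | 0 ≤ g x})).toReal) -
        ((choquet μ (fun x => -g x) (E ∩ {x | g x < 0})).toReal -
          -c * (μ (E ∩ {x | g x < 0})).toReal)| := by ring_nf
  _ ≤ _ := abs_sub _ _
  _ ≤ _ := by linarith

end Choquet

lemma abs_div_sub_mul_le {N D c h : ℝ} (h0 : 0 ≤ h) (hD : h ≤ D) :
    |N / D - c| * h ≤ |N - c * D| := by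
  rcases (h0.trans hD).eq_or_lt with hD0 | hD0
  · simp [← hD0, le_antisymm (hD0 ▸ hD) h0]
  · calc |N / D - c| * h ≤ |N / D - c| * D := by gcongr
    _ = |N - c * D| := by
        rw [← abs_of_pos hD0, ← abs_mul, abs_of_pos hD0, sub_mul, div_mul_cancel₀ _ hD0.ne']

section Content

variable {n : ℕ} {δ : ℝ}

lemma hContent_mono (δ : ℝ) : Monotone (hContent n δ) := fun _ _ hAB =>
  le_iInf₂ fun Qs hB => iInf₂_le Qs (hAB.trans hB)

lemma dContent_mono (δ : ℝ) : Monotone (dContent n δ) := fun _ _ hAB =>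
  le_iInf₂ fun Qs hB => iInf₂_le Qs ⟨hB.1, hAB.trans hB.2⟩

lemma dContent_union_le (δ : ℝ) (A B : Set (Fin n → ℝ)) :
    dContent n δ (A ∪ B) ≤ dContent n δ A + dContent n δ B := by
  refine ENNReal.le_iInf_add_iInf fun QA QB => ENNReal.le_iInf_add_iInf fun hA hB => ?_
  let e := Equiv.natSumNatEquivNat
  let Qs : ℕ → Cube n := Sum.elim QA QB ∘ e.symm
  have hcov : A ∪ B ⊆ ⋃ i, (Qs i).toSet := by
    rintro x (hx | hx)
    · obtain ⟨j, hj⟩ := mem_iUnion.1 (hA.2 hx)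
      exact mem_iUnion.2 ⟨e (.inl j), by simpa [Qs] using hj⟩
    · obtain ⟨j, hj⟩ := mem_iUnion.1 (hB.2 hx)
      exact mem_iUnion.2 ⟨e (.inr j), by simpa [Qs] using hj⟩
  have hdy : ∀ i, (Qs i).IsDyadic := fun i => by
    cases h : e.symm i <;> simp [Qs, h, hA.1, hB.1]
  calc dContent n δ (A ∪ B) ≤ ∑' i, ENNReal.ofReal ((Qs i).side ^ δ) := iInf₂_le Qs ⟨hdy, hcov⟩
  _ = _ := (e.symm.tsum_eq fun s => ENNReal.ofReal ((Sum.elim QA QB s).side ^ δ)).trans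
      (ENNReal.summable.tsum_sum ENNReal.summable)

lemma hContent_cube_ne_top (hδ : 0 < δ) (Q : Cube n) : hContent n δ Q.toSet ≠ ⊤ := by
  set w := ENNReal.ofReal ((2⁻¹ : ℝ) ^ δ)
  have hw : w < 1 := ENNReal.ofReal_lt_one.2 (Real.rpow_lt_one (by norm_num) (by norm_num) hδ)
  let Qs : ℕ → Cube n := fun i => ⟨Q.corner, Q.side * 2⁻¹ ^ i, by have := Q.side_pos; positivity⟩
  have hcov : Q.toSet ⊆ ⋃ i, (Qs i).toSet := fun x hx =>
    mem_iUnion.2 ⟨0, by simpa [Qs, Cube.toSet] using hx⟩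
  have hsum : ∑' i, ENNReal.ofReal ((Qs i).side ^ δ) = ENNReal.ofReal (Q.side ^ δ) * (1 - w)⁻¹ := by
    rw [← ENNReal.tsum_geometric, ← ENNReal.tsum_mul_left]
    refine tsum_congr fun i => ?_
    rw [Real.mul_rpow Q.side_pos.le (by positivity), ← Real.rpow_pow_comm (by norm_num),
      ENNReal.ofReal_mul (by have := Q.side_pos; positivity), ENNReal.ofReal_pow (by positivity)]
  refine ne_top_of_le_ne_top ?_ ((iInf₂_le Qs hcov).trans_eq hsum)
  exact ENNReal.mul_ne_top ENNReal.ofReal_ne_top (ENNReal.inv_ne_top.2 (tsub_pos_of_lt hw).ne')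

end Content

section BMO

variable {n : ℕ} {δ K : ℝ}

lemma abs_avgQ_sub_mul_le (hK : 0 ≤ K)
    (hKcomp : ∀ E : Set (Fin n → ℝ),
      hContent n δ E ≤ dContent n δ E ∧ dContent n δ E ≤ ENNReal.ofReal K * hContent n δ E)
    (f : (Fin n → ℝ) → ℝ) (Q : Cube n) (c : ℝ) (hQ : hContent n δ Q.toSet ≠ ⊤)
    (hI : integH n δ (fun x => |f x - c|) Q.toSet ≠ ⊤) :
    |avgQ n δ f Q - c| * (hContent n δ Q.toSet).toReal ≤
      2 * K * (integH n δ (fun x => |f x - c|) Q.toSet).toReal := by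
  have hKI : ENNReal.ofReal K * integH n δ (fun x => |f x - c|) Q.toSet ≠ ⊤ :=
    ENNReal.mul_ne_top ENNReal.ofReal_ne_top hI
  have hJ : choquet (dContent n δ) (fun x => |f x - c|) Q.toSet ≤
      ENNReal.ofReal K * integH n δ (fun x => |f x - c|) Q.toSet :=
    choquet_le_mul ENNReal.ofReal_ne_top (fun X => (hKcomp X).2) _ _
  have hJ_toReal : (choquet (dContent n δ) (fun x => |f x - c|) Q.toSet).toReal ≤
      K * (integH n δ (fun x => |f x - c|) Q.toSet).toReal := by
    simpa [ENNReal.toReal_mul, ENNReal.toReal_ofReal hK] using ENNReal.toReal_mono hKI hJ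
  have hdQ : dContent n δ Q.toSet ≠ ⊤ :=
    ne_top_of_le_ne_top (ENNReal.mul_ne_top ENNReal.ofReal_ne_top hQ) (hKcomp _).2
  have hsplit := abs_choquet_sub_choquet_neg_sub_le (dContent_mono δ) (dContent_union_le δ) c hdQ
    (ne_top_of_le_ne_top hKI hJ)
  have hD : (hContent n δ Q.toSet).toReal ≤ (dContent n δ (Q.toSet ∩ {x | 0 ≤ f x})).toReal +
      (dContent n δ (Q.toSet ∩ {x | f x < 0})).toReal := by
    have hcover : Q.toSet ⊆ (Q.toSet ∩ {x | 0 ≤ f x}) ∪ (Q.toSet ∩ {x | f x < 0}) :=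
      fun x hx => (le_or_gt 0 (f x)).imp (⟨hx, ·⟩) (⟨hx, ·⟩)
    have hfin : ∀ S ⊆ Q.toSet, dContent n δ S ≠ ⊤ := fun S hS =>
      ne_top_of_le_ne_top hdQ (dContent_mono δ hS)
    rw [← ENNReal.toReal_add (hfin _ inter_subset_left) (hfin _ inter_subset_left)]
    exact ENNReal.toReal_mono (ENNReal.add_ne_top.2 ⟨hfin _ inter_subset_left,
      hfin _ inter_subset_left⟩)
      ((hKcomp _).1.trans ((dContent_mono δ hcover).trans (dContent_union_le δ _ _)))
  exact (abs_div_sub_mul_le ENNReal.toReal_nonneg hD).trans (hsplit.trans (by linarith))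

lemma integH_abs_sub_avgQ_le (hδ : 0 < δ) (hK : 0 ≤ K)
    (hKcomp : ∀ E : Set (Fin n → ℝ),
      hContent n δ E ≤ dContent n δ E ∧ dContent n δ E ≤ ENNReal.ofReal K * hContent n δ E)
    (f : (Fin n → ℝ) → ℝ) (Q : Cube n) (c : ℝ) :
    integH n δ (fun x => |f x - avgQ n δ f Q|) Q.toSet ≤
      ENNReal.ofReal (1 + 2 * K) * integH n δ (fun x => |f x - c|) Q.toSet := by
  set a := avgQ n δ f Q
  set I := integH n δ (fun x => |f x - c|) Q.toSet
  have hQ := hContent_cube_ne_top hδ Q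
  rcases eq_or_ne I ⊤ with hI | hI
  · rw [hI, ENNReal.mul_top (ENNReal.ofReal_pos.2 (by linarith)).ne']
    exact le_top
  have hshift : ENNReal.ofReal |a - c| * hContent n δ Q.toSet ≤ ENNReal.ofReal (2 * K) * I := by
    rw [← ENNReal.ofReal_toReal hQ, ← ENNReal.ofReal_toReal hI, ← ENNReal.ofReal_mul (abs_nonneg _),
      ← ENNReal.ofReal_mul (by positivity)]
    exact ENNReal.ofReal_le_ofReal (abs_avgQ_sub_mul_le hK hKcomp f Q c hQ hI)
  calc integH n δ (fun x => |f x - a|) Q.toSet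
      ≤ choquet (hContent n δ) (fun x => |a - c| + |f x - c|) Q.toSet :=
        choquet_mono (hContent_mono δ) fun x hx =>
          ⟨hx, by linarith [abs_sub_le (f x) c a, abs_sub_comm c a]⟩
  _ = ENNReal.ofReal |a - c| * hContent n δ Q.toSet + I :=
        choquet_const_add (abs_nonneg _) fun _ _ => abs_nonneg _
  _ ≤ ENNReal.ofReal (2 * K) * I + I := by gcongr
  _ = ENNReal.ofReal (1 + 2 * K) * I := by
        rw [add_comm 1, ENNReal.ofReal_add (by positivity) zero_le_one, ENNReal.ofReal_one]
        ring

lemma bmoNorm_le_bmoTildeNorm (f : (Fin n → ℝ) → ℝ) : bmoNorm n δ f ≤ bmoTildeNorm n δ f :=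
  iSup_mono fun Q => iInf_le _ (avgQ n δ f Q)

lemma bmoTildeNorm_le_mul_bmoNorm (hδ : 0 < δ) (hK : 0 ≤ K)
    (hKcomp : ∀ E : Set (Fin n → ℝ),
      hContent n δ E ≤ dContent n δ E ∧ dContent n δ E ≤ ENNReal.ofReal K * hContent n δ E)
    (f : (Fin n → ℝ) → ℝ) :
    bmoTildeNorm n δ f ≤ ENNReal.ofReal (1 + 2 * K) * bmoNorm n δ f := by
  refine iSup_le fun Q => ?_
  calc integH n δ (fun x => |f x - avgQ n δ f Q|) Q.toSet / hContent n δ Q.toSet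
      ≤ ⨅ c : ℝ, ENNReal.ofReal (1 + 2 * K) *
          (integH n δ (fun x => |f x - c|) Q.toSet / hContent n δ Q.toSet) :=
        le_iInf fun c => by
          rw [← mul_div_assoc]
          exact ENNReal.div_le_div_right (integH_abs_sub_avgQ_le hδ hK hKcomp f Q c) _
  _ = ENNReal.ofReal (1 + 2 * K) *
        ⨅ c : ℝ, integH n δ (fun x => |f x - c|) Q.toSet / hContent n δ Q.toSet :=
        (ENNReal.mul_iInf_of_ne (ENNReal.ofReal_pos.2 (by linarith)).ne'
          ENNReal.ofReal_ne_top).symm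
  _ ≤ ENNReal.ofReal (1 + 2 * K) * bmoNorm n δ f := by
        gcongr
        exact le_iSup (fun Q : Cube n => ⨅ c : ℝ,
          integH n δ (fun x => |f x - c|) Q.toSet / hContent n δ Q.toSet) Q

end BMO

theorem stmt4_general (n : ℕ) (δ : ℝ) (hδ0 : 0 < δ)
    (K : ℝ) (hK : 1 ≤ K)
    (hKcomp : ∀ E : Set (Fin n → ℝ),
      hContent n δ E ≤ dContent n δ E ∧ dContent n δ E ≤ ENNReal.ofReal K * hContent n δ E) :
    ∀ f : (Fin n → ℝ) → ℝ, MemBMO n δ f →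
      bmoNorm n δ f ≤ bmoTildeNorm n δ f ∧
        bmoTildeNorm n δ f ≤ ENNReal.ofReal (1 + 2 * K) * bmoNorm n δ f :=
  fun f _ => ⟨bmoNorm_le_bmoTildeNorm f,
    bmoTildeNorm_le_mul_bmoNorm hδ0 (zero_le_one.trans hK) hKcomp f⟩

/-- equivalence of the BMO seminorm and the mean-based BMO seminorm. -/
theorem stmt4 (n : ℕ) (hn : 1 ≤ n) (δ : ℝ) (hδ0 : 0 < δ) (hδn : δ ≤ n)
    (K : ℝ) (hK : 1 ≤ K)
    (hKcomp : ∀ E : Set (Fin n → ℝ),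
      hContent n δ E ≤ dContent n δ E ∧ dContent n δ E ≤ ENNReal.ofReal K * hContent n δ E) :
    ∀ f : (Fin n → ℝ) → ℝ, MemBMO n δ f →
      bmoNorm n δ f ≤ bmoTildeNorm n δ f ∧
        bmoTildeNorm n δ f ≤ ENNReal.ofReal (1 + 2 * K) * bmoNorm n δ f :=
  stmt4_general n δ hδ0 K hK hKcomp
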